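/- Let 5/6 < θ < 1. Then there are exactly three strictly positive continuous functions φ on [0,1] satisfying φ(t) = ∫₀¹ (1 + θ(4(t−1/2)(u−1/2))^{1/3}) φ(u)² du for all t, namely φ₁ ≡ 1 and φ_{2,3}(t) = (5/(6θ))(1 ± √((6θ−5)/3)·(2(t−1/2))^{1/3}). -/
import Mathlib

open MeasureTheory Set intervalIntegral

noncomputable def cbrt (x : ℝ) : ℝ := Real.sign x * |x| ^ ((1:ℝ)/3)

lemma cbrt_zero : cbrt 0 = 0 := by simp [cbrt, Real.sign_zero]

lemma cbrt_of_nonneg {x : ℝ} (hx : 0 ≤ x) : cbrt x = x ^ ((1:ℝ)/3) := by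
  rcases eq_or_lt_of_le hx with h | h
  · simp [cbrt, ← h, Real.sign_zero, Real.zero_rpow (by norm_num : (1:ℝ)/3 ≠ 0)]
  · rw [cbrt, Real.sign_of_pos h, abs_of_pos h, one_mul]

lemma cbrt_neg (x : ℝ) : cbrt (-x) = -cbrt x := by
  rcases lt_trichotomy x 0 with h | rfl | h
  · rw [cbrt, cbrt, Real.sign_of_neg h, Real.sign_of_pos (by linarith), abs_neg]; ring
  · simp [cbrt_zero]
  · rw [cbrt, cbrt, Real.sign_of_pos h, Real.sign_of_neg (by linarith), abs_neg]; ring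

lemma cbrt_one : cbrt 1 = 1 := by
  rw [cbrt_of_nonneg zero_le_one, Real.one_rpow]

lemma cbrt_mul (x y : ℝ) : cbrt (x * y) = cbrt x * cbrt y := by
  have hs : Real.sign (x * y) = Real.sign x * Real.sign y := by
    rcases lt_trichotomy x 0 with hx | rfl | hx <;>
    rcases lt_trichotomy y 0 with hy | rfl | hy <;>
    simp [Real.sign_of_neg, Real.sign_of_pos, Real.sign_zero, mul_pos, mul_neg_of_neg_of_pos,
      mul_neg_of_pos_of_neg, mul_pos_of_neg_of_neg, *]
  rw [cbrt, cbrt, cbrt, hs, abs_mul, Real.mul_rpow (abs_nonneg x) (abs_nonneg y)]; ring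

lemma abs_cbrt (x : ℝ) : |cbrt x| = |x| ^ ((1:ℝ)/3) := by
  rcases lt_trichotomy x 0 with h | rfl | h
  · rw [cbrt, Real.sign_of_neg h, abs_mul, abs_neg, abs_one, one_mul,
      abs_of_nonneg (Real.rpow_nonneg (abs_nonneg x) _)]
  · simp [cbrt_zero, Real.zero_rpow (by norm_num : (1:ℝ)/3 ≠ 0)]
  · rw [cbrt, Real.sign_of_pos h, one_mul, abs_of_nonneg (Real.rpow_nonneg (abs_nonneg x) _)]

lemma sq_cbrt (x : ℝ) : cbrt x ^ 2 = |x| ^ ((2:ℝ)/3) := by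
  rw [← sq_abs, abs_cbrt, ← Real.rpow_natCast (|x| ^ ((1:ℝ)/3)) 2,
    ← Real.rpow_mul (abs_nonneg x)]
  norm_num

lemma cube_cbrt (x : ℝ) : cbrt x ^ 3 = x := by
  have h : (|x| ^ ((1:ℝ)/3)) ^ 3 = |x| := by
    rw [← Real.rpow_natCast (|x| ^ ((1:ℝ)/3)) 3, ← Real.rpow_mul (abs_nonneg x)]
    norm_num
  rcases lt_trichotomy x 0 with hx | rfl | hx
  · rw [cbrt, Real.sign_of_neg hx, mul_pow, h, abs_of_neg hx]; ring
  · simp [cbrt_zero]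
  · rw [cbrt, Real.sign_of_pos hx, mul_pow, h, abs_of_pos hx]; ring

lemma continuous_abs_rpow : Continuous fun x : ℝ => |x| ^ ((1:ℝ)/3) :=
  (Real.continuous_rpow_const (by norm_num)).comp continuous_abs

lemma continuous_cbrt : Continuous cbrt := by
  rw [continuous_iff_continuousAt]
  intro x
  rcases lt_trichotomy x 0 with hx | rfl | hx
  · have hev : cbrt =ᶠ[nhds x] fun y => -(|y| ^ ((1:ℝ)/3)) := by
      filter_upwards [isOpen_Iio.eventually_mem (show x ∈ Iio (0:ℝ) from hx)] with y hy
      rw [cbrt, Real.sign_of_neg hy]; ring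
    exact ContinuousAt.congr (continuous_abs_rpow.neg.continuousAt) hev.symm
  · have key : Filter.Tendsto cbrt (nhds 0) (nhds 0) := by
      apply squeeze_zero_norm (fun y => le_of_eq (abs_cbrt y))
      have h0 : Filter.Tendsto (fun y : ℝ => |y| ^ ((1:ℝ)/3)) (nhds 0) (nhds (|(0:ℝ)| ^ ((1:ℝ)/3))) :=
        continuous_abs_rpow.continuousAt
      rwa [abs_zero, Real.zero_rpow (by norm_num : (1:ℝ)/3 ≠ 0)] at h0
    simpa [ContinuousAt, cbrt_zero] using key
  · have hev : cbrt =ᶠ[nhds x] fun y => |y| ^ ((1:ℝ)/3) := by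
      filter_upwards [isOpen_Ioi.eventually_mem (show x ∈ Ioi (0:ℝ) from hx)] with y hy
      rw [cbrt, Real.sign_of_pos hy, one_mul]
    exact ContinuousAt.congr (continuous_abs_rpow.continuousAt) hev.symm

lemma abs_cbrt_le_one {x : ℝ} (hx : |x| ≤ 1) : |cbrt x| ≤ 1 := by
  rw [abs_cbrt]
  exact Real.rpow_le_one (abs_nonneg x) hx (by norm_num)

lemma intInt_cbrt_pow (ψ : ℝ → ℝ) (hψ : ContinuousOn ψ (Icc 0 1)) (n : ℕ) :
    IntervalIntegrable (fun u => cbrt (2*(u - 1/2)) ^ n * ψ u ^ 2) volume 0 1 := by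
  apply ContinuousOn.intervalIntegrable
  rw [uIcc_of_le zero_le_one]
  exact (((continuous_cbrt.comp (by continuity)).pow n).continuousOn).mul (hψ.pow 2)

lemma integral_cbrt_sym : ∫ x in (-1:ℝ)..1, cbrt x = 0 := by
  have hint : ∀ a b : ℝ, IntervalIntegrable cbrt volume a b :=
    fun a b => continuous_cbrt.intervalIntegrable a b
  have h1 : ∫ x in (-1:ℝ)..0, cbrt x = -∫ x in (0:ℝ)..1, cbrt x := by
    have := intervalIntegral.integral_comp_neg (a := (0:ℝ)) (b := 1) (fun x => cbrt x)
    simp only [neg_zero] at this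
    rw [← this]
    simp_rw [cbrt_neg]
    rw [intervalIntegral.integral_neg]
  rw [← intervalIntegral.integral_add_adjacent_intervals (hint (-1) 0) (hint 0 1), h1]
  ring

lemma integral_cbrt_sq_sym : ∫ x in (-1:ℝ)..1, cbrt x ^ 2 = 6/5 := by
  have hint : ∀ a b : ℝ, IntervalIntegrable (fun x => cbrt x ^ 2) volume a b :=
    fun a b => (continuous_cbrt.pow 2).intervalIntegrable a b
  have hpos : ∫ x in (0:ℝ)..1, cbrt x ^ 2 = 3/5 := by
    have hcg : ∀ x ∈ uIcc (0:ℝ) 1, cbrt x ^ 2 = x ^ ((2:ℝ)/3) := by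
      intro x hx
      rw [uIcc_of_le zero_le_one] at hx
      rw [sq_cbrt, abs_of_nonneg hx.1]
    rw [intervalIntegral.integral_congr hcg, integral_rpow (Or.inl (by norm_num))]
    norm_num
  have hneg : ∫ x in (-1:ℝ)..0, cbrt x ^ 2 = 3/5 := by
    have := intervalIntegral.integral_comp_neg (a := (0:ℝ)) (b := 1) (fun x => cbrt x ^ 2)
    simp only [neg_zero] at this
    rw [← this]
    simp_rw [cbrt_neg, neg_sq]
    simpa using hpos
  rw [← intervalIntegral.integral_add_adjacent_intervals (hint (-1) 0) (hint 0 1), hpos, hneg]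
  norm_num

lemma I0 : ∫ u in (0:ℝ)..1, cbrt (2*(u - 1/2)) = 0 := by
  have h : ∀ u : ℝ, cbrt (2*(u - 1/2)) = cbrt (2*u - 1) := by intro u; ring_nf
  simp_rw [h]
  rw [intervalIntegral.integral_comp_mul_sub cbrt (by norm_num : (2:ℝ) ≠ 0) 1]
  norm_num [integral_cbrt_sym]

lemma I2 : ∫ u in (0:ℝ)..1, cbrt (2*(u - 1/2)) ^ 2 = 3/5 := by
  have h : ∀ u : ℝ, cbrt (2*(u - 1/2)) ^ 2 = (fun x => cbrt x ^ 2) (2*u - 1) := by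
    intro u; ring_nf
  simp_rw [h]
  rw [intervalIntegral.integral_comp_mul_sub (fun x => cbrt x ^ 2) (by norm_num : (2:ℝ) ≠ 0) 1]
  norm_num [integral_cbrt_sq_sym]

lemma I3 : ∫ u in (0:ℝ)..1, cbrt (2*(u - 1/2)) ^ 3 = 0 := by
  have h : ∀ u : ℝ, cbrt (2*(u - 1/2)) ^ 3 = 2*u - 1 := by
    intro u; rw [cube_cbrt]; ring
  simp_rw [h]
  rw [intervalIntegral.integral_sub (by apply Continuous.intervalIntegrable; continuity)
    (by apply Continuous.intervalIntegrable; continuity)]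
  rw [intervalIntegral.integral_const_mul]
  simp [integral_id]

lemma continuous_c : Continuous fun u : ℝ => cbrt (2*(u - 1/2)) :=
  continuous_cbrt.comp (by continuity)

lemma ii_c (n : ℕ) (k : ℝ) :
    IntervalIntegrable (fun u : ℝ => k * cbrt (2*(u - 1/2)) ^ n) volume 0 1 :=
  (continuous_const.mul (continuous_c.pow n)).intervalIntegrable 0 1

lemma exp2 (a b : ℝ) :
    ∫ u in (0:ℝ)..1, (a + b * cbrt (2*(u - 1/2))) ^ 2 = a^2 + 3/5 * b^2 := by
  have h : ∀ u : ℝ, (a + b * cbrt (2*(u - 1/2))) ^ 2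
      = (a^2 * cbrt (2*(u - 1/2)) ^ 0 + (2*a*b) * cbrt (2*(u - 1/2)) ^ 1)
        + b^2 * cbrt (2*(u - 1/2)) ^ 2 := by
    intro u; ring
  simp_rw [h]
  rw [intervalIntegral.integral_add ((ii_c 0 (a^2)).add (ii_c 1 (2*a*b))) (ii_c 2 (b^2)),
    intervalIntegral.integral_add (ii_c 0 (a^2)) (ii_c 1 (2*a*b)),
    intervalIntegral.integral_const_mul, intervalIntegral.integral_const_mul,
    intervalIntegral.integral_const_mul]
  simp_rw [pow_one, pow_zero]
  rw [I0, I2]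
  simp; ring

lemma exp3 (a b : ℝ) :
    ∫ u in (0:ℝ)..1, cbrt (2*(u - 1/2)) * (a + b * cbrt (2*(u - 1/2))) ^ 2
      = 6/5 * (a * b) := by
  have h : ∀ u : ℝ, cbrt (2*(u - 1/2)) * (a + b * cbrt (2*(u - 1/2))) ^ 2
      = (a^2 * cbrt (2*(u - 1/2)) ^ 1 + (2*a*b) * cbrt (2*(u - 1/2)) ^ 2)
        + b^2 * cbrt (2*(u - 1/2)) ^ 3 := by
    intro u; ring
  simp_rw [h]
  rw [intervalIntegral.integral_add ((ii_c 1 (a^2)).add (ii_c 2 (2*a*b))) (ii_c 3 (b^2)),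
    intervalIntegral.integral_add (ii_c 1 (a^2)) (ii_c 2 (2*a*b)),
    intervalIntegral.integral_const_mul, intervalIntegral.integral_const_mul,
    intervalIntegral.integral_const_mul]
  simp_rw [pow_one]
  rw [I0, I2, I3]
  ring

lemma key (θ : ℝ) (ψ : ℝ → ℝ) (hψ : ContinuousOn ψ (Icc 0 1)) (t : ℝ) :
    ∫ u in (0:ℝ)..1, (1 + θ * cbrt (4*(t - 1/2)*(u - 1/2))) * ψ u ^ 2
      = (∫ u in (0:ℝ)..1, ψ u ^ 2)
        + θ * cbrt (2*(t - 1/2)) * ∫ u in (0:ℝ)..1, cbrt (2*(u - 1/2)) * ψ u ^ 2 := by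
  have hcongr : ∀ u : ℝ, (1 + θ * cbrt (4*(t - 1/2)*(u - 1/2))) * ψ u ^ 2
      = ψ u ^ 2 + (θ * cbrt (2*(t - 1/2))) * (cbrt (2*(u - 1/2)) * ψ u ^ 2) := by
    intro u
    have h4 : 4*(t - 1/2)*(u - 1/2) = (2*(t - 1/2)) * (2*(u - 1/2)) := by ring
    rw [h4, cbrt_mul]; ring
  simp_rw [hcongr]
  have hi1 : IntervalIntegrable (fun u => ψ u ^ 2) volume 0 1 := by
    apply ContinuousOn.intervalIntegrable
    rw [uIcc_of_le zero_le_one]; exact hψ.pow 2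
  have hi2 : IntervalIntegrable
      (fun u => (θ * cbrt (2*(t - 1/2))) * (cbrt (2*(u - 1/2)) * ψ u ^ 2)) volume 0 1 := by
    apply IntervalIntegrable.const_mul
    apply ContinuousOn.intervalIntegrable
    rw [uIcc_of_le zero_le_one]
    exact continuous_c.continuousOn.mul (hψ.pow 2)
  rw [intervalIntegral.integral_add hi1 hi2, intervalIntegral.integral_const_mul]

lemma solves' (θ A B : ℝ) (ψ : ℝ → ℝ)
    (hψeq : ∀ u, ψ u = A + B * cbrt (2*(u - 1/2)))
    (h1 : A = A^2 + 3/5 * B^2) (h2 : B = θ * (6/5 * (A * B))) (t : ℝ) :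
    ψ t = ∫ u in (0:ℝ)..1, (1 + θ * cbrt (4*(t - 1/2)*(u - 1/2))) * ψ u ^ 2 := by
  have hψc : ContinuousOn ψ (Icc 0 1) := by
    have h : ψ = fun u => A + B * cbrt (2*(u - 1/2)) := funext hψeq
    rw [h]
    exact (continuous_const.add (continuous_const.mul continuous_c)).continuousOn
  rw [key θ ψ hψc t]
  have e1 : (∫ u in (0:ℝ)..1, ψ u ^ 2) = A^2 + 3/5 * B^2 := by
    rw [intervalIntegral.integral_congr
      (g := fun u => (A + B * cbrt (2*(u - 1/2))) ^ 2)
      (fun u _ => by simp only [hψeq u])]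
    exact exp2 A B
  have e2 : (∫ u in (0:ℝ)..1, cbrt (2*(u - 1/2)) * ψ u ^ 2) = 6/5 * (A * B) := by
    rw [intervalIntegral.integral_congr
      (g := fun u => cbrt (2*(u - 1/2)) * (A + B * cbrt (2*(u - 1/2))) ^ 2)
      (fun u _ => by simp only [hψeq u])]
    exact exp3 A B
  rw [e1, e2, hψeq t]
  linear_combination h1 + cbrt (2*(t - 1/2)) * h2

theorem stmt15 (θ : ℝ) (hθ0 : 5/6 < θ) (hθ1 : θ < 1) :
    let φ₁ : ℝ → ℝ := fun _ => 1
    let φ₂ : ℝ → ℝ := fun t => (5/(6*θ)) * (1 + Real.sqrt ((6*θ - 5)/3) * cbrt (2*(t - 1/2)))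
    let φ₃ : ℝ → ℝ := fun t => (5/(6*θ)) * (1 - Real.sqrt ((6*θ - 5)/3) * cbrt (2*(t - 1/2)))
    (∀ ψ ∈ ({φ₁, φ₂, φ₃} : Set (ℝ → ℝ)),
      ContinuousOn ψ (Icc 0 1) ∧ (∀ t ∈ Icc (0:ℝ) 1, 0 < ψ t) ∧
      (∀ t ∈ Icc (0:ℝ) 1,
        ψ t = ∫ u in (0:ℝ)..1, (1 + θ * cbrt (4*(t - 1/2)*(u - 1/2))) * ψ u ^ 2)) ∧
    (φ₁ ≠ φ₂ ∧ φ₁ ≠ φ₃ ∧ φ₂ ≠ φ₃) ∧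
    (∀ φ : ℝ → ℝ, ContinuousOn φ (Icc 0 1) → (∀ t ∈ Icc (0:ℝ) 1, 0 < φ t) →
      (∀ t ∈ Icc (0:ℝ) 1,
        φ t = ∫ u in (0:ℝ)..1, (1 + θ * cbrt (4*(t - 1/2)*(u - 1/2))) * φ u ^ 2) →
      (∀ t ∈ Icc (0:ℝ) 1, φ t = φ₁ t) ∨ (∀ t ∈ Icc (0:ℝ) 1, φ t = φ₂ t) ∨
      (∀ t ∈ Icc (0:ℝ) 1, φ t = φ₃ t)) := by
  intro φ₁ φ₂ φ₃
  have hθpos : 0 < θ := by linarith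
  have hθne : (6:ℝ)*θ ≠ 0 := by positivity
  have hs2 : Real.sqrt ((6*θ - 5)/3) ^ 2 = (6*θ - 5)/3 :=
    Real.sq_sqrt (by linarith)
  set s := Real.sqrt ((6*θ - 5)/3) with hs
  have hspos : 0 < s := Real.sqrt_pos.2 (by linarith)
  have hslt : s < 1 := by nlinarith
  have h6 : 6*θ*(5/(6*θ)) = 5 := by field_simp
  -- conditions (h1,h2) for the two nontrivial solutions
  have h1p : 5/(6*θ) = (5/(6*θ))^2 + 3/5 * ((5/(6*θ))*s)^2 := by
    linear_combination (-3/5*(5/(6*θ))^2) * hs2 + (-(5/(6*θ))/5) * h6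
  have h2p : (5/(6*θ))*s = θ * (6/5 * ((5/(6*θ)) * ((5/(6*θ))*s))) := by
    linear_combination (-((5/(6*θ))*s)/5) * h6
  have h1m : 5/(6*θ) = (5/(6*θ))^2 + 3/5 * (-((5/(6*θ))*s))^2 := by
    linear_combination (-3/5*(5/(6*θ))^2) * hs2 + (-(5/(6*θ))/5) * h6
  have h2m : -((5/(6*θ))*s) = θ * (6/5 * ((5/(6*θ)) * (-((5/(6*θ))*s)))) := by
    linear_combination (((5/(6*θ))*s)/5) * h6
  have hb2 : ∀ u : ℝ, φ₂ u = 5/(6*θ) + ((5/(6*θ))*s) * cbrt (2*(u - 1/2)) := by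
    intro u; show (5/(6*θ)) * (1 + s * cbrt (2*(u - 1/2))) = _; ring
  have hb3 : ∀ u : ℝ, φ₃ u = 5/(6*θ) + (-((5/(6*θ))*s)) * cbrt (2*(u - 1/2)) := by
    intro u; show (5/(6*θ)) * (1 - s * cbrt (2*(u - 1/2))) = _; ring
  have hb1 : ∀ u : ℝ, φ₁ u = 1 + 0 * cbrt (2*(u - 1/2)) := by intro u; show (1:ℝ) = _; ring
  have hbound : ∀ t ∈ Icc (0:ℝ) 1, -1 ≤ cbrt (2*(t - 1/2)) ∧ cbrt (2*(t - 1/2)) ≤ 1 := by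
    intro t ht
    have := abs_cbrt_le_one (x := 2*(t - 1/2)) (abs_le.2 ⟨by linarith [ht.1], by linarith [ht.2]⟩)
    exact abs_le.1 this
  refine ⟨?_, ⟨?_, ?_, ?_⟩, ?_⟩
  · -- all three are solutions
    intro ψ hmem
    simp only [Set.mem_insert_iff, Set.mem_singleton_iff] at hmem
    rcases hmem with rfl | rfl | rfl
    · refine ⟨continuousOn_const, fun t _ => one_pos, fun t _ => ?_⟩
      exact solves' θ 1 0 φ₁ hb1 (by norm_num) (by ring) t
    · refine ⟨?_, ?_, fun t _ => solves' θ (5/(6*θ)) ((5/(6*θ))*s) φ₂ hb2 h1p h2p t⟩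
      · have h : φ₂ = fun u => 5/(6*θ) + ((5/(6*θ))*s) * cbrt (2*(u - 1/2)) := funext hb2
        rw [h]
        exact (continuous_const.add (continuous_const.mul continuous_c)).continuousOn
      · intro t ht
        rw [hb2 t]
        have hc := (hbound t ht).1
        have := mul_le_mul_of_nonneg_left hc hspos.le
        have ha : 0 < 5/(6*θ) := by positivity
        nlinarith
    · refine ⟨?_, ?_, fun t _ => solves' θ (5/(6*θ)) (-((5/(6*θ))*s)) φ₃ hb3 h1m h2m t⟩
      · have h : φ₃ = fun u => 5/(6*θ) + (-((5/(6*θ))*s)) * cbrt (2*(u - 1/2)) := funext hb3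
        rw [h]
        exact (continuous_const.add (continuous_const.mul continuous_c)).continuousOn
      · intro t ht
        rw [hb3 t]
        have hc := (hbound t ht).2
        have := mul_le_mul_of_nonneg_left hc hspos.le
        have ha : 0 < 5/(6*θ) := by positivity
        nlinarith
  · -- φ₁ ≠ φ₂
    intro h
    have h2 : (1:ℝ) = (5/(6*θ)) * (1 + s * cbrt (2*((1:ℝ)/2 - 1/2))) := congrFun h (1/2)
    have harg : 2*((1:ℝ)/2 - 1/2) = 0 := by norm_num
    rw [harg, cbrt_zero] at h2
    have : (6:ℝ)*θ = 5 := by field_simp at h2; linarith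
    linarith
  · -- φ₁ ≠ φ₃
    intro h
    have h2 : (1:ℝ) = (5/(6*θ)) * (1 - s * cbrt (2*((1:ℝ)/2 - 1/2))) := congrFun h (1/2)
    have harg : 2*((1:ℝ)/2 - 1/2) = 0 := by norm_num
    rw [harg, cbrt_zero] at h2
    have : (6:ℝ)*θ = 5 := by field_simp at h2; linarith
    linarith
  · -- φ₂ ≠ φ₃
    intro h
    have h2 : (5/(6*θ)) * (1 + s * cbrt (2*((1:ℝ) - 1/2)))
        = (5/(6*θ)) * (1 - s * cbrt (2*((1:ℝ) - 1/2))) := congrFun h 1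
    have harg : 2*((1:ℝ) - 1/2) = 1 := by norm_num
    rw [harg, cbrt_one] at h2
    have ha : 0 < 5/(6*θ) := by positivity
    nlinarith
  · -- uniqueness
    intro φ hcont hpos heq
    set A := ∫ u in (0:ℝ)..1, φ u ^ 2 with hA
    set B := θ * ∫ u in (0:ℝ)..1, cbrt (2*(u - 1/2)) * φ u ^ 2 with hB
    have hrep : ∀ t ∈ Icc (0:ℝ) 1, φ t = A + B * cbrt (2*(t - 1/2)) := by
      intro t ht
      rw [heq t ht, key θ φ hcont t, hA, hB]
      ring
    have hApos : 0 < A := by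
      have h12 : (1:ℝ)/2 ∈ Icc (0:ℝ) 1 := by constructor <;> norm_num
      have := hrep (1/2) h12
      have harg : 2*((1:ℝ)/2 - 1/2) = 0 := by norm_num
      rw [harg, cbrt_zero, mul_zero, add_zero] at this
      rw [← this]
      exact hpos (1/2) h12
    have hEq1 : A = A^2 + 3/5 * B^2 := by
      conv_lhs => rw [hA]
      rw [intervalIntegral.integral_congr
        (g := fun u => (A + B * cbrt (2*(u - 1/2))) ^ 2)
        (fun u hu => by
          rw [uIcc_of_le zero_le_one] at hu
          simp only [hrep u hu])]
      exact exp2 A B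
    have hEq2 : B = θ * (6/5 * (A * B)) := by
      conv_lhs => rw [hB]
      rw [intervalIntegral.integral_congr
        (g := fun u => cbrt (2*(u - 1/2)) * (A + B * cbrt (2*(u - 1/2))) ^ 2)
        (fun u hu => by
          rw [uIcc_of_le zero_le_one] at hu
          simp only [hrep u hu])]
      rw [exp3 A B]
    rcases eq_or_ne B 0 with hB0 | hB0
    · left
      have hA1 : A = 1 := by
        have hfac : A * (A - 1) = 0 := by
          rw [hB0] at hEq1; linear_combination -hEq1
        rcases mul_eq_zero.1 hfac with h | h
        · exact absurd h hApos.ne'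
        · linarith
      intro t ht
      rw [hrep t ht, hA1, hB0]
      show (1:ℝ) + 0 * _ = 1
      ring
    · have hAval : A = 5/(6*θ) := by
        have hfac : B * (1 - θ*(6/5*A)) = 0 := by linear_combination hEq2
        rcases mul_eq_zero.1 hfac with h | h
        · exact absurd h hB0
        · field_simp
          linarith
      have h6A : 6*θ*A = 5 := by rw [hAval]; field_simp
      have hB2 : B^2 = (A*s)^2 := by
        linear_combination (-5/3)*hEq1 + (-A^2)*hs2 + (-A/3)*h6A
      have hfac2 : (B - A*s) * (B + A*s) = 0 := by linear_combination hB2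
      rcases mul_eq_zero.1 hfac2 with h | h
      · right; left
        intro t ht
        rw [hrep t ht]
        show A + B * cbrt (2*(t - 1/2)) = (5/(6*θ)) * (1 + s * cbrt (2*(t - 1/2)))
        have hBv : B = A*s := by linarith
        rw [hBv, hAval]
        ring
      · right; right
        intro t ht
        rw [hrep t ht]
        show A + B * cbrt (2*(t - 1/2)) = (5/(6*θ)) * (1 - s * cbrt (2*(t - 1/2)))
        have hBv : B = -(A*s) := by linarith
        rw [hBv, hAval]
        ring
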